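/- Let n be a positive integer, m a divisor of n, a and b integers with 0 ≤ a,b < n/m, and c an integer with 0 ≤ c < m and gcd(c,m) = 1. Let ρ_{a,b,c} be the m-dimensional representation of H(n) defined by (ρ_{a,b,c}(x,y,z)f)(j) = e^{2πi·m(ax̃+bỹ)/n}·e^{2πi·c(ȳj+z̄)/m}·f(j+x̄) on functions f : ℤ/mℤ → ℂ (bars denoting reduction mod m). Then its character χ_{a,b,c}(x,y,z) = trace(ρ_{a,b,c}(x,y,z)) satisfies: χ_{a,b,c}(x,y,z) = 0 unless both x and y lie in the subgroup m·(ℤ/nℤ) of ℤ/nℤ, and in that case χ_{a,b,c}(x,y,z) = m·e^{2πi·m(ax̃+bỹ)/n}·e^{2πi·c·z̄/m}. -/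

import Mathlib

/-! In the basis of delta functions, `ρ_{a,b,c}(x,y,z)` sends `δ_j` to a multiple of `δ_{j-x̄}`, so
the trace vanishes unless `x̄ = 0`. When `x̄ = 0` the diagonal entries are a constant times
`e^{2πi·c·ȳ·j/m}`, and summing this additive character of `ℤ/mℤ` over `j` gives `m` if `c·ȳ = 0`
and `0` otherwise; as `c` is a unit mod `m`, `c·ȳ = 0` means `ȳ = 0`. -/

open scoped BigOperators

/-- The Heisenberg group mod `n`, as triples `(x, y, z)` of elements of `ℤ/nℤ`. -/
abbrev Heis (n : ℕ) := ZMod n × ZMod n × ZMod n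

/-- The representation `ρ_{a,b,c}` of `H(n)` on functions `f : ℤ/mℤ → ℂ`:
`(ρ_{a,b,c}(x,y,z)f)(j) = e^{2πi·m(a·x̃+b·ỹ)/n}·e^{2πi·c(ȳ·j+z̄)/m}·f(j+x̄)`,
where `x̃, ỹ` are integer representatives of `x, y`, and bars denote reduction
mod `m` (well defined since `m ∣ n`). -/
noncomputable def heisRep (n m : ℕ) (hm : m ∣ n) (a b c : ℕ) (g : Heis n)
    (f : ZMod m → ℂ) : ZMod m → ℂ := fun j =>
  Complex.exp (2 * (Real.pi : ℂ) * Complex.I *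
      ((m : ℂ) * ((a : ℂ) * ((g.1.val : ℕ) : ℂ) + (b : ℂ) * ((g.2.1.val : ℕ) : ℂ))) /
      (n : ℂ)) *
    Complex.exp (2 * (Real.pi : ℂ) * Complex.I *
      ((c : ℂ) *
        (((ZMod.castHom hm (ZMod m) g.2.1 * j + ZMod.castHom hm (ZMod m) g.2.2).val : ℕ) : ℂ)) /
      (m : ℂ)) *
    f (j + ZMod.castHom hm (ZMod m) g.1)

theorem ZMod.castHom_eq_zero_iff_exists_eq_mul {n m : ℕ} (hm : m ∣ n) (x : ZMod n) :
    ZMod.castHom hm (ZMod m) x = 0 ↔ ∃ u : ZMod n, x = (m : ZMod n) * u := by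
  refine ⟨fun hx => ?_, ?_⟩
  · obtain ⟨k, rfl⟩ := ZMod.intCast_surjective x
    rw [map_intCast, ZMod.intCast_zmod_eq_zero_iff_dvd] at hx
    obtain ⟨u, rfl⟩ := hx
    exact ⟨u, by push_cast; rfl⟩
  · rintro ⟨u, rfl⟩
    rw [map_mul, map_natCast, ZMod.natCast_self, zero_mul]

theorem Complex.exp_natCast_mul_val_div_eq_stdAddChar (m : ℕ) [NeZero m] (c : ℕ) (w : ZMod m) :
    Complex.exp (2 * (Real.pi : ℂ) * Complex.I * ((c : ℂ) * ((w.val : ℕ) : ℂ)) / (m : ℂ)) =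
      ZMod.stdAddChar ((c : ZMod m) * w) := by
  have hcast : (((c * w.val : ℕ) : ℤ) : ZMod m) = (c : ZMod m) * w := by
    push_cast
    rw [ZMod.natCast_zmod_val]
  rw [← hcast, ZMod.stdAddChar_coe]
  push_cast
  rfl

noncomputable def heisPhase (n m a b : ℕ) (g : Heis n) : ℂ :=
  Complex.exp (2 * (Real.pi : ℂ) * Complex.I *
      ((m : ℂ) * ((a : ℂ) * ((g.1.val : ℕ) : ℂ) + (b : ℂ) * ((g.2.1.val : ℕ) : ℂ))) /
      (n : ℂ))

section Trace

variable {n m : ℕ} [NeZero m] (hm : m ∣ n) (a b c : ℕ) (g : Heis n)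

local notation "π_m" => ZMod.castHom hm (ZMod m)

theorem heisRep_single_apply_self (j : ZMod m) :
    heisRep n m hm a b c g (Pi.single j 1) j =
      (if π_m g.1 = 0 then heisPhase n m a b g else 0) *
        ZMod.stdAddChar ((c : ZMod m) * π_m g.2.2) *
        ZMod.stdAddChar (j * ((c : ZMod m) * π_m g.2.1)) := by
  have hsplit : (c : ZMod m) * (π_m g.2.1 * j + π_m g.2.2) =
      (c : ZMod m) * π_m g.2.2 + j * ((c : ZMod m) * π_m g.2.1) := by ring
  simp only [heisRep, Complex.exp_natCast_mul_val_div_eq_stdAddChar, Pi.single_apply,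
    add_eq_left, hsplit, AddChar.map_add_eq_mul]
  split_ifs <;> simp only [heisPhase, mul_one, mul_zero, zero_mul, mul_assoc]

theorem sum_heisRep_single_apply_self (hcm : Nat.gcd c m = 1) :
    ∑ j : ZMod m, heisRep n m hm a b c g (Pi.single j 1) j =
      if π_m g.1 = 0 ∧ π_m g.2.1 = 0 then
        (m : ℂ) * heisPhase n m a b g * ZMod.stdAddChar ((c : ZMod m) * π_m g.2.2)
      else 0 := by
  have hc : IsUnit (c : ZMod m) := (ZMod.isUnit_iff_coprime c m).mpr hcm
  simp_rw [heisRep_single_apply_self, ← Finset.mul_sum,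
    AddChar.sum_mulShift _ (ZMod.isPrimitive_stdAddChar m), hc.mul_right_eq_zero, ZMod.card]
  by_cases hx : π_m g.1 = 0 <;> by_cases hy : π_m g.2.1 = 0 <;>
    simp only [hx, hy, and_self, and_true, true_and, if_true, if_false, Nat.cast_zero, mul_zero,
      zero_mul]
  ring

end Trace

theorem heisRep_character_general (n m : ℕ) [NeZero m] (hm : m ∣ n) (a b c : ℕ)
    (hcm : Nat.gcd c m = 1)
    (g : Heis n) :
    (((∃ u : ZMod n, g.1 = (m : ZMod n) * u) ∧ (∃ v : ZMod n, g.2.1 = (m : ZMod n) * v)) →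
      ∑ j : ZMod m, heisRep n m hm a b c g (Pi.single j 1) j =
        (m : ℂ) *
          Complex.exp (2 * (Real.pi : ℂ) * Complex.I *
            ((m : ℂ) * ((a : ℂ) * ((g.1.val : ℕ) : ℂ) + (b : ℂ) * ((g.2.1.val : ℕ) : ℂ))) /
            (n : ℂ)) *
          Complex.exp (2 * (Real.pi : ℂ) * Complex.I *
            ((c : ℂ) * (((ZMod.castHom hm (ZMod m) g.2.2).val : ℕ) : ℂ)) / (m : ℂ))) ∧
    (¬ ((∃ u : ZMod n, g.1 = (m : ZMod n) * u) ∧ (∃ v : ZMod n, g.2.1 = (m : ZMod n) * v)) →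
      ∑ j : ZMod m, heisRep n m hm a b c g (Pi.single j 1) j = 0) := by
  rw [sum_heisRep_single_apply_self hm a b c g hcm, Complex.exp_natCast_mul_val_div_eq_stdAddChar,
    ← ZMod.castHom_eq_zero_iff_exists_eq_mul hm, ← ZMod.castHom_eq_zero_iff_exists_eq_mul hm]
  exact ⟨fun h => if_pos h, fun h => if_neg h⟩

/-- The character `χ_{a,b,c}(x,y,z) = trace(ρ_{a,b,c}(x,y,z))`, computed in the basis of
delta functions: `trace = ∑_j (ρ_{a,b,c}(g)(δ_j))(j)`. It vanishes unless both `x` and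
`y` lie in the subgroup `m·(ℤ/nℤ)`, in which case it equals
`m·e^{2πi·m(a·x̃+b·ỹ)/n}·e^{2πi·c·z̄/m}`. -/
theorem heisRep_character (n m : ℕ) [NeZero m] (hn : 0 < n) (hm : m ∣ n) (a b c : ℕ)
    (ha : a < n / m) (hb : b < n / m) (hc : c < m) (hcm : Nat.gcd c m = 1)
    (g : Heis n) :
    (((∃ u : ZMod n, g.1 = (m : ZMod n) * u) ∧ (∃ v : ZMod n, g.2.1 = (m : ZMod n) * v)) →
      ∑ j : ZMod m, heisRep n m hm a b c g (Pi.single j 1) j =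
        (m : ℂ) *
          Complex.exp (2 * (Real.pi : ℂ) * Complex.I *
            ((m : ℂ) * ((a : ℂ) * ((g.1.val : ℕ) : ℂ) + (b : ℂ) * ((g.2.1.val : ℕ) : ℂ))) /
            (n : ℂ)) *
          Complex.exp (2 * (Real.pi : ℂ) * Complex.I *
            ((c : ℂ) * (((ZMod.castHom hm (ZMod m) g.2.2).val : ℕ) : ℂ)) / (m : ℂ))) ∧
    (¬ ((∃ u : ZMod n, g.1 = (m : ZMod n) * u) ∧ (∃ v : ZMod n, g.2.1 = (m : ZMod n) * v)) →
      ∑ j : ZMod m, heisRep n m hm a b c g (Pi.single j 1) j = 0) :=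
  heisRep_character_general n m hm a b c hcm g
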